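/- arXiv:2308.00334 — 5 statements merged into one kernel-verified Lean document; each statement's English description precedes it below -/
import Mathlib

section
/- For every k ∈ ℕ, the comb graph consisting of a path (handle) with teeth of length k attached alternately requires exactly ⌊n/(k+1)⌋ vertices in any k-hop dominating set, where n is the total number of vertices. In particular, the Meir–Moon bound ⌊n/(k+1)⌋ is tight for trees. -/
/-- The comb graph with `t` teeth of length `k`: vertices are pairs `(i, j)` with
`i < t` (which tooth) and `j ≤ k` (position along the tooth, `j = 0` being the
handle vertex).  Handle vertices are joined in a path, and each tooth is a path
hanging off its handle vertex. -/
def combGraph (t k : ℕ) : SimpleGraph (Fin t × Fin (k + 1)) :=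
  SimpleGraph.fromRel (fun a b =>
    (a.1 = b.1 ∧ a.2.val + 1 = b.2.val) ∨
    (a.2.val = 0 ∧ b.2.val = 0 ∧ a.1.val + 1 = b.1.val))


open SimpleGraph

lemma walk_abs_le {V : Type*} {G : SimpleGraph V} (f : V → ℤ)
    (hf : ∀ a b, G.Adj a b → |f a - f b| ≤ 1) :
    ∀ {a b : V} (w : G.Walk a b), |f a - f b| ≤ w.length := by
  intro a b w
  induction w with
  | nil => simp
  | @cons u v c h w ih =>
    calc |f u - f c| ≤ |f u - f v| + |f v - f c| := abs_sub_le _ _ _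
    _ ≤ 1 + w.length := add_le_add (hf _ _ h) ih
    _ = (Walk.cons h w).length := by simp [Walk.length_cons]; ring

/-- A `k`-hop dominating set of a graph. -/
def IsKHopDom {V : Type*} (G : SimpleGraph V) (k : ℕ) (D : Finset V) : Prop :=
  ∀ v : V, ∃ d ∈ D, G.Reachable d v ∧ G.dist d v ≤ k


lemma combGraph_exists_walk (t k : ℕ) (i : Fin t) :
    ∀ (m : ℕ) (hm : m < k + 1),
      ∃ w : (combGraph t k).Walk (i, (0 : Fin (k+1))) (i, ⟨m, hm⟩), w.length = m := by
  intro m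
  induction m with
  | zero =>
    intro hm
    have : (⟨0, hm⟩ : Fin (k+1)) = 0 := rfl
    exact ⟨this ▸ Walk.nil, by simp⟩
  | succ m ih =>
    intro hm
    obtain ⟨w, hw⟩ := ih (Nat.lt_of_succ_lt hm)
    have hadj : (combGraph t k).Adj (i, ⟨m, Nat.lt_of_succ_lt hm⟩) (i, ⟨m+1, hm⟩) := by
      rw [combGraph, fromRel_adj]
      refine ⟨by simp [Prod.ext_iff, Fin.ext_iff], Or.inl (Or.inl ⟨rfl, rfl⟩)⟩
    exact ⟨w.concat hadj, by simp [Walk.length_concat, hw]⟩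

/-- The comb graph on `n = t(k+1)` vertices needs exactly `⌊n/(k+1)⌋ = t` vertices in
any `k`-hop dominating set: every `k`-hop dominating set has at least `t` vertices and
some `k`-hop dominating set has exactly `t` vertices.  Hence the Meir–Moon bound
`⌊n/(k+1)⌋` is tight for trees. -/
theorem combGraph_kHopDominationNumber (t k : ℕ) (ht : 0 < t) :
    (∀ D : Finset (Fin t × Fin (k + 1)), IsKHopDom (combGraph t k) k D →
      Fintype.card (Fin t × Fin (k + 1)) / (k + 1) ≤ D.card) ∧
    (∃ D : Finset (Fin t × Fin (k + 1)), IsKHopDom (combGraph t k) k D ∧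
      D.card = Fintype.card (Fin t × Fin (k + 1)) / (k + 1)) := by
  have hcard : Fintype.card (Fin t × Fin (k + 1)) / (k + 1) = t := by
    simp [Fintype.card_prod, Nat.mul_div_cancel _ (Nat.succ_pos k)]
  rw [hcard]
  constructor
  · -- lower bound
    intro D hD
    have : Set.SurjOn (fun d : Fin t × Fin (k+1) => d.1) ↑D ↑(Finset.univ : Finset (Fin t)) := by
      intro i _
      -- the tip of tooth i
      obtain ⟨d, hdD, hreach, hdist⟩ := hD (i, ⟨k, Nat.lt_succ_self k⟩)
      refine ⟨d, hdD, ?_⟩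
      by_contra hne
      -- potential function
      set f : Fin t × Fin (k+1) → ℤ := fun v => if v.1 = i then (v.2.val : ℤ) else -1 with hf
      have hstep : ∀ a b, (combGraph t k).Adj a b → |f a - f b| ≤ 1 := by
        intro a b hab
        rw [combGraph, fromRel_adj] at hab
        obtain ⟨hne', h | h⟩ := hab <;>
          rcases h with ⟨h1, h2⟩ | ⟨h1, h2, h3⟩ <;>
          simp only [hf] <;> split_ifs <;>
          simp_all [abs_sub_le_iff] <;> omega
      obtain ⟨w, hw⟩ := hreach.exists_walk_length_eq_dist
      have hb := walk_abs_le f hstep w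
      rw [hw] at hb
      have hfd : f d = -1 := by simp [hf, hne]
      have hftip : f (i, ⟨k, Nat.lt_succ_self k⟩) = k := by simp [hf]
      rw [hfd, hftip] at hb
      have : ((k:ℤ) + 1) ≤ (combGraph t k).dist d (i, ⟨k, Nat.lt_succ_self k⟩) := by
        have : |(-1 : ℤ) - k| = k + 1 := by
          rw [abs_sub_comm]
          simp [abs_of_nonneg]
          omega
        omega
      omega
    have := Finset.card_le_card_of_surjOn _ this
    simpa using this
  · -- upper bound: handle vertices
    refine ⟨Finset.univ.image (fun i : Fin t => (i, (0 : Fin (k+1)))), ?_, ?_⟩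
    · intro v
      obtain ⟨i, j⟩ := v
      refine ⟨(i, 0), by simp, ?_⟩
      obtain ⟨w, hw⟩ := combGraph_exists_walk t k i j.val j.isLt
      have hle : j.val ≤ k := Nat.lt_succ_iff.mp j.isLt
      exact ⟨⟨w⟩, le_trans (SimpleGraph.dist_le w) (by omega)⟩
    · rw [Finset.card_image_of_injective _ (by intro a b h; simpa using h)]
      simp
end

section
/- Let k ≥ 1 and consider the grid graph G that is the dual of the plus-shaped polyomino consisting of a (2k+1)×(2k+1) L1-diamond arrangement realizing the lower-bound construction: there exist a grid graph G and three vertices g₁, g₂, g₃ such that the family of balls of radius k around g₁, g₂, g₃ shatters {g₁,g₂,g₃}, i.e., for every subset S ⊆ {1,2,3} there is a vertex v of G with d(v,gᵢ) ≤ k exactly for i ∈ S. -/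
/-!
Take the boundary of the lattice square `[0,k]²` and attach three pendant paths: the vertex
`(0,-1)` below the corner `(0,0)`, the vertex `(k,k+1)` above the corner `(k,k)`, and a tail
from the corner `(k,0)` out to `(2k+1,0)`. The shattered vertices are these three corners.

In an induced subgraph of the grid, the distance is at least the taxicab distance, with equality
when the lattice box spanned by the two endpoints lies in the vertex set (walk monotonically).
Hence every ball condition becomes taxicab arithmetic, and the eight subsets are realised by:
the corner `(k,0)` for all three; the corners `(0,0)`, `(k,k)` and the fourth corner `(0,k)` for
the pairs; the three pendant vertices for the singletons; the end of the tail for none.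
-/

/-- The infinite grid graph on `ℤ²`. -/
def gridGraph : SimpleGraph (ℤ × ℤ) where
  Adj a b := |a.1 - b.1| + |a.2 - b.2| = 1
  symm := by
    constructor
    intro a b h
    rw [abs_sub_comm b.1 a.1, abs_sub_comm b.2 a.2]
    exact h
  loopless := by constructor; intro a; simp

def taxicab (p q : ℤ × ℤ) : ℕ := (p.1 - q.1).natAbs + (p.2 - q.2).natAbs

theorem gridGraph_adj_iff {p q : ℤ × ℤ} : gridGraph.Adj p q ↔ taxicab p q = 1 := by
  change |p.1 - q.1| + |p.2 - q.2| = 1 ↔ _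
  simp only [Int.abs_eq_natAbs, taxicab]
  omega

theorem taxicab_triangle (p q r : ℤ × ℤ) : taxicab p r ≤ taxicab p q + taxicab q r := by
  unfold taxicab; omega

theorem mem_uIcc_prod {p q r : ℤ × ℤ} :
    r ∈ Set.uIcc p q ↔ r.1 ∈ Set.uIcc p.1 q.1 ∧ r.2 ∈ Set.uIcc p.2 q.2 := by
  rw [Set.uIcc_prod_eq, Set.mem_prod]

theorem exists_adj_mem_uIcc {p q : ℤ × ℤ} (hpq : p ≠ q) :
    ∃ r ∈ Set.uIcc p q, gridGraph.Adj p r ∧ taxicab r q + 1 = taxicab p q := by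
  obtain ⟨a, b⟩ := p
  obtain ⟨c, d⟩ := q
  simp only [gridGraph_adj_iff, mem_uIcc_prod, Set.mem_uIcc, taxicab]
  rw [Ne, Prod.mk.injEq] at hpq
  rcases (by omega : a < c ∨ c < a ∨ b < d ∨ d < b) with h | h | h | h
  · exact ⟨(a + 1, b), by omega⟩
  · exact ⟨(a - 1, b), by omega⟩
  · exact ⟨(a, b + 1), by omega⟩
  · exact ⟨(a, b - 1), by omega⟩

section InducedGrid

variable {V : Set (ℤ × ℤ)}

theorem taxicab_le_length {u v : V} (p : (gridGraph.induce V).Walk u v) :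
    taxicab u v ≤ p.length := by
  induction p with
  | nil => simp [taxicab]
  | @cons a b c hab _ ih =>
    have hab : taxicab a b = 1 := gridGraph_adj_iff.1 hab
    have hac := taxicab_triangle a b c
    rw [SimpleGraph.Walk.length_cons]
    omega

theorem taxicab_le_edist (u v : V) : (taxicab u v : ℕ∞) ≤ (gridGraph.induce V).edist u v := by
  rw [SimpleGraph.edist_eq_sInf]
  refine le_sInf ?_
  rintro _ ⟨p, rfl⟩
  exact Nat.cast_le.2 (taxicab_le_length p)

theorem exists_walk_length_eq_taxicab {u v : V} (h : Set.uIcc (u : ℤ × ℤ) v ⊆ V) :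
    ∃ p : (gridGraph.induce V).Walk u v, p.length = taxicab u v := by
  generalize hn : taxicab u v = n
  induction n generalizing u with
  | zero =>
    unfold taxicab at hn
    obtain rfl : u = v := Subtype.ext (Prod.ext (by omega) (by omega))
    exact ⟨.nil, rfl⟩
  | succ n ih =>
    have huv : (u : ℤ × ℤ) ≠ v := fun h' => by simp [h', taxicab] at hn
    obtain ⟨r, hr, hadj, hrv⟩ := exists_adj_mem_uIcc huv
    obtain ⟨p, hp⟩ := ih (u := ⟨r, h hr⟩)
      ((Set.uIcc_subset_uIcc hr Set.right_mem_uIcc).trans h) (by simp only; omega)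
    have hadj : (gridGraph.induce V).Adj u ⟨r, h hr⟩ := hadj
    exact ⟨.cons hadj p, by rw [SimpleGraph.Walk.length_cons, hp]⟩

theorem edist_eq_taxicab_of_uIcc_subset {u v : V} (h : Set.uIcc (u : ℤ × ℤ) v ⊆ V) :
    (gridGraph.induce V).edist u v = taxicab u v := by
  obtain ⟨p, hp⟩ := exists_walk_length_eq_taxicab h
  exact le_antisymm (hp ▸ SimpleGraph.edist_le p) (taxicab_le_edist u v)

theorem edist_le_of_uIcc_subset {u v : V} {n : ℕ}
    (h : Set.uIcc (u : ℤ × ℤ) v ⊆ V) (huv : taxicab u v ≤ n) :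
    (gridGraph.induce V).edist u v ≤ n := by
  rw [edist_eq_taxicab_of_uIcc_subset h]
  exact_mod_cast huv

theorem not_edist_le_of_lt_taxicab {u v : V} {n : ℕ} (huv : n < taxicab u v) :
    ¬ (gridGraph.induce V).edist u v ≤ n :=
  fun h => (taxicab_le_edist u v |>.trans h |> Nat.cast_le.1 |>.trans_lt huv).false

theorem reachable_of_uIcc_subset {u v : V} (h : Set.uIcc (u : ℤ × ℤ) v ⊆ V) :
    (gridGraph.induce V).Reachable u v :=
  (exists_walk_length_eq_taxicab h).elim fun p _ => ⟨p⟩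

end InducedGrid

def shatterGrid (k : ℕ) : Set (ℤ × ℤ) :=
  {p | (p.2 = 0 ∧ 0 ≤ p.1 ∧ p.1 ≤ 2 * k + 1) ∨ (p.2 = k ∧ 0 ≤ p.1 ∧ p.1 ≤ k) ∨
    (p.1 = 0 ∧ -1 ≤ p.2 ∧ p.2 ≤ k) ∨ (p.1 = k ∧ 0 ≤ p.2 ∧ p.2 ≤ k + 1)}

def shatterCorner (k : ℕ) (i : Fin 3) : shatterGrid k :=
  ⟨(![(0, 0), (k, 0), (k, k)] : Fin 3 → ℤ × ℤ) i, by
    fin_cases i <;>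
      simp only [shatterGrid, Set.mem_ofPred_eq, Fin.zero_eta, Fin.mk_one, Fin.reduceFinMk,
        Matrix.cons_val_zero, Matrix.cons_val_one, Matrix.cons_val, true_and] <;> omega⟩

theorem shatterGrid_finite (k : ℕ) : (shatterGrid k).Finite := by
  refine (Set.finite_Icc ((-1, -1) : ℤ × ℤ) (2 * k + 1, k + 1)).subset ?_
  rintro ⟨a, b⟩ h
  simp only [shatterGrid, Set.mem_ofPred_eq] at h
  simp only [Set.mem_Icc, Prod.mk_le_mk]
  omega

theorem shatterGrid_connected (k : ℕ) : (gridGraph.induce (shatterGrid k)).Connected := by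
  have hub (v : ℤ × ℤ) (hv : v ∈ shatterGrid k) : ∃ c : ℤ × ℤ,
      Set.uIcc (0, 0) c ⊆ shatterGrid k ∧ Set.uIcc c v ⊆ shatterGrid k := by
    obtain ⟨a, b⟩ := v
    rcases hv with h | h | h | h <;>
      [refine ⟨(0, 0), ?_, ?_⟩; refine ⟨(0, k), ?_, ?_⟩; refine ⟨(0, 0), ?_, ?_⟩;
        refine ⟨(k, 0), ?_, ?_⟩] <;>
    · intro r hr
      simp only [mem_uIcc_prod, Set.mem_uIcc, shatterGrid, Set.mem_ofPred_eq] at h hr ⊢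
      omega
  have origin : ((0, 0) : ℤ × ℤ) ∈ shatterGrid k := by simp [shatterGrid]
  have reach (v : shatterGrid k) :
      (gridGraph.induce (shatterGrid k)).Reachable ⟨_, origin⟩ v := by
    obtain ⟨c, h₀, h₁⟩ := hub v v.2
    exact (reachable_of_uIcc_subset (v := ⟨c, h₀ Set.right_mem_uIcc⟩) h₀).trans
      (reachable_of_uIcc_subset h₁)
  have : Nonempty (shatterGrid k) := ⟨⟨_, origin⟩⟩
  exact ⟨fun u v => (reach u).symm.trans (reach v)⟩

theorem shatterCorner_injective {k : ℕ} (hk : 1 ≤ k) :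
    Function.Injective (shatterCorner k) := by
  intro i j h
  fin_cases i <;> fin_cases j <;>
    simp only [shatterCorner, Subtype.mk.injEq, Prod.mk.injEq, Fin.zero_eta, Fin.mk_one,
      Fin.reduceFinMk, Matrix.cons_val_zero, Matrix.cons_val_one, Matrix.cons_val] at h ⊢ <;>
    omega

theorem shatterGrid_shattered {k : ℕ} (hk : 1 ≤ k) (S : Set (Fin 3)) :
    ∃ v : shatterGrid k, ∀ i : Fin 3,
      ((gridGraph.induce (shatterGrid k)).edist v (shatterCorner k i) ≤ k ↔ i ∈ S) := by
  by_cases h₀ : 0 ∈ S <;> by_cases h₁ : 1 ∈ S <;> by_cases h₂ : 2 ∈ S <;>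
    [refine ⟨⟨(k, 0), ?_⟩, ?_⟩; refine ⟨⟨(0, 0), ?_⟩, ?_⟩;
      refine ⟨⟨(0, k), ?_⟩, ?_⟩; refine ⟨⟨(0, -1), ?_⟩, ?_⟩;
      refine ⟨⟨(k, k), ?_⟩, ?_⟩; refine ⟨⟨(k + 1, 0), ?_⟩, ?_⟩;
      refine ⟨⟨(k, k + 1), ?_⟩, ?_⟩; refine ⟨⟨(2 * k + 1, 0), ?_⟩, ?_⟩]
  all_goals first
    | simp only [shatterGrid, Set.mem_ofPred_eq, true_and]; omega
    | intro i
      fin_cases i <;>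
        simp only [h₀, h₁, h₂, iff_true, iff_false, shatterCorner, Fin.zero_eta, Fin.mk_one,
          Fin.reduceFinMk, Matrix.cons_val_zero, Matrix.cons_val_one, Matrix.cons_val] <;>
        first
        | exact edist_le_of_uIcc_subset (fun r hr => by
            simp only [mem_uIcc_prod, Set.mem_uIcc, shatterGrid, Set.mem_ofPred_eq] at hr ⊢
            omega) (by simp only [taxicab]; omega)
        | exact not_edist_le_of_lt_taxicab (by simp only [taxicab]; omega)

/-- Lower bound for the VC dimension of `k`-hop visibility in simple polyominoes:
for every `k ≥ 1` there is a (connected, finite) grid graph with three distinct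
vertices `g₁, g₂, g₃` that are shattered by the radius-`k` balls: for every subset
`S ⊆ {1,2,3}` there is a vertex `v` with `d(v, gᵢ) ≤ k` exactly for `i ∈ S`. -/
theorem vc_lower_bound_simple (k : ℕ) (hk : 1 ≤ k) :
    ∃ (V : Set (ℤ × ℤ)), V.Finite ∧ (gridGraph.induce V).Connected ∧
      ∃ g : Fin 3 → V, Function.Injective g ∧
        ∀ S : Set (Fin 3), ∃ v : V,
          ∀ i : Fin 3, ((gridGraph.induce V).edist v (g i) ≤ k ↔ i ∈ S) :=
  ⟨shatterGrid k, shatterGrid_finite k, shatterGrid_connected k, shatterCorner k,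
    shatterCorner_injective hk, shatterGrid_shattered hk⟩
end

section
/- In the full grid ℤ² (or any rectangular grid graph containing the relevant balls), no set of four vertices can be shattered by balls of radius k: for any four vertices g₁,g₂,g₃,g₄ there is a subset S ⊆ {1,2,3,4} for which no vertex v satisfies (d(v,gᵢ) ≤ k ⟺ i ∈ S). Equivalently, the VC dimension of the family of L1-balls of radius k in ℤ² is at most 3. -/
private lemma abs_split (p q k : ℤ) : |p| + |q| ≤ k ↔ |p + q| ≤ k ∧ |p - q| ≤ k := by
  simp only [Int.abs_eq_natAbs]
  omega

/-- In the full grid `ℤ²` (where graph distance is L1-distance), no four distinct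
vertices can be shattered by balls of radius `k`: there is a subset `S ⊆ {1,2,3,4}`
such that no vertex `v` satisfies `d(v, gᵢ) ≤ k ⟺ i ∈ S`.  Equivalently, the VC
dimension of the family of L1-balls of radius `k` in `ℤ²` is at most 3. -/
theorem vc_upper_bound_grid (k : ℕ) (g : Fin 4 → ℤ × ℤ) (hg : Function.Injective g) :
    ∃ S : Set (Fin 4), ¬ ∃ v : ℤ × ℤ,
      ∀ i : Fin 4, (|v.1 - (g i).1| + |v.2 - (g i).2| ≤ (k : ℤ) ↔ i ∈ S) := by
  classical
  set u : Fin 4 → ℤ := fun i => (g i).1 + (g i).2 with hu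
  set w : Fin 4 → ℤ := fun i => (g i).1 - (g i).2 with hw
  have key : ∀ (v : ℤ × ℤ) (i : Fin 4), (|v.1 - (g i).1| + |v.2 - (g i).2| ≤ (k : ℤ)) ↔
      (|v.1 + v.2 - u i| ≤ k ∧ |v.1 - v.2 - w i| ≤ k) := by
    intro v i
    have e1 : v.1 - (g i).1 + (v.2 - (g i).2) = v.1 + v.2 - u i := by
      simp only [hu]; ring
    have e2 : v.1 - (g i).1 - (v.2 - (g i).2) = v.1 - v.2 - w i := by
      simp only [hw]; ring
    rw [abs_split, e1, e2]
  by_cases H : ∃ j : Fin 4, (∃ i, i ≠ j ∧ u j ≤ u i) ∧ (∃ i, i ≠ j ∧ u i ≤ u j)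
      ∧ (∃ i, i ≠ j ∧ w j ≤ w i) ∧ (∃ i, i ≠ j ∧ w i ≤ w j)
  · -- dominated point j : the subset avoiding j cannot be cut out
    obtain ⟨j, ⟨i1, hi1, h1⟩, ⟨i2, hi2, h2⟩, ⟨i3, hi3, h3⟩, ⟨i4, hi4, h4⟩⟩ := H
    refine ⟨{j}ᶜ, ?_⟩
    rintro ⟨v, hv⟩
    have m1 : i1 ∈ ({j}ᶜ : Set (Fin 4)) := by simpa using hi1
    have m2 : i2 ∈ ({j}ᶜ : Set (Fin 4)) := by simpa using hi2
    have m3 : i3 ∈ ({j}ᶜ : Set (Fin 4)) := by simpa using hi3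
    have m4 : i4 ∈ ({j}ᶜ : Set (Fin 4)) := by simpa using hi4
    have c1 := (key v i1).mp ((hv i1).mpr m1)
    have c2 := (key v i2).mp ((hv i2).mpr m2)
    have c3 := (key v i3).mp ((hv i3).mpr m3)
    have c4 := (key v i4).mp ((hv i4).mpr m4)
    have hj : j ∈ ({j}ᶜ : Set (Fin 4)) := by
      rw [← hv j, key]
      simp only [abs_le] at c1 c2 c3 c4 ⊢
      constructor
      · constructor <;> linarith [c1.1.1, c1.1.2, c2.1.1, c2.1.2]
      · constructor <;> linarith [c3.2.1, c3.2.2, c4.2.1, c4.2.2]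
    simp at hj
  · -- every point is a strict extreme in some coordinate
    have roles : ∀ j : Fin 4, (∀ i, i ≠ j → u i < u j) ∨ (∀ i, i ≠ j → u j < u i)
        ∨ (∀ i, i ≠ j → w i < w j) ∨ (∀ i, i ≠ j → w j < w i) := by
      intro j
      by_contra hc
      push_neg at hc
      obtain ⟨⟨a1, ha1, ha1'⟩, ⟨a2, ha2, ha2'⟩, ⟨a3, ha3, ha3'⟩, ⟨a4, ha4, ha4'⟩⟩ := hc
      exact H ⟨j, ⟨a1, ha1, ha1'⟩, ⟨a2, ha2, ha2'⟩, ⟨a3, ha3, ha3'⟩, ⟨a4, ha4, ha4'⟩⟩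
    set R1 : Fin 4 → Prop := fun j => ∀ i, i ≠ j → u i < u j with hR1def
    set R2 : Fin 4 → Prop := fun j => ∀ i, i ≠ j → u j < u i with hR2def
    set R3 : Fin 4 → Prop := fun j => ∀ i, i ≠ j → w i < w j with hR3def
    set R4 : Fin 4 → Prop := fun j => ∀ i, i ≠ j → w j < w i with hR4def
    have uniq1 : ∀ j j', R1 j → R1 j' → j = j' := by
      intro j j' h h'
      by_contra hne
      have := h j' (Ne.symm hne)
      have := h' j hne
      omega
    have uniq2 : ∀ j j', R2 j → R2 j' → j = j' := by
      intro j j' h h'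
      by_contra hne
      have := h j' (Ne.symm hne)
      have := h' j hne
      omega
    have uniq3 : ∀ j j', R3 j → R3 j' → j = j' := by
      intro j j' h h'
      by_contra hne
      have := h j' (Ne.symm hne)
      have := h' j hne
      omega
    have uniq4 : ∀ j j', R4 j → R4 j' → j = j' := by
      intro j j' h h'
      by_contra hne
      have := h j' (Ne.symm hne)
      have := h' j hne
      omega
    let f : Fin 4 → Fin 4 := fun j =>
      if R1 j then 0 else if R2 j then 1 else if R3 j then 2 else 3
    have hf : ∀ j, (f j = 0 ∧ R1 j) ∨ (f j = 1 ∧ R2 j) ∨ (f j = 2 ∧ R3 j)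
        ∨ (f j = 3 ∧ R4 j) := by
      intro j
      simp only [f]
      split_ifs with p1 p2 p3
      · exact Or.inl ⟨rfl, p1⟩
      · exact Or.inr (Or.inl ⟨rfl, p2⟩)
      · exact Or.inr (Or.inr (Or.inl ⟨rfl, p3⟩))
      · rcases roles j with h | h | h | h
        · exact absurd h p1
        · exact absurd h p2
        · exact absurd h p3
        · exact Or.inr (Or.inr (Or.inr ⟨rfl, h⟩))
    have finj : Function.Injective f := by
      intro j j' hjj
      rcases hf j with ⟨e, r⟩ | ⟨e, r⟩ | ⟨e, r⟩ | ⟨e, r⟩ <;>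
        rcases hf j' with ⟨e', r'⟩ | ⟨e', r'⟩ | ⟨e', r'⟩ | ⟨e', r'⟩ <;>
        rw [e, e'] at hjj <;>
        first
          | exact uniq1 j j' r r'
          | exact uniq2 j j' r r'
          | exact uniq3 j j' r r'
          | exact uniq4 j j' r r'
          | exact absurd hjj (by decide)
    have fsurj : Function.Surjective f := Finite.surjective_of_injective finj
    obtain ⟨a, ha⟩ := fsurj 0
    obtain ⟨b, hb⟩ := fsurj 1
    obtain ⟨c, hc⟩ := fsurj 2
    obtain ⟨d, hd⟩ := fsurj 3
    have Ra : R1 a := by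
      rcases hf a with ⟨e, r⟩ | ⟨e, r⟩ | ⟨e, r⟩ | ⟨e, r⟩ <;> rw [ha] at e <;>
        first | exact r | exact absurd e (by decide)
    have Rb : R2 b := by
      rcases hf b with ⟨e, r⟩ | ⟨e, r⟩ | ⟨e, r⟩ | ⟨e, r⟩ <;> rw [hb] at e <;>
        first | exact r | exact absurd e (by decide)
    have Rc : R3 c := by
      rcases hf c with ⟨e, r⟩ | ⟨e, r⟩ | ⟨e, r⟩ | ⟨e, r⟩ <;> rw [hc] at e <;>
        first | exact r | exact absurd e (by decide)
    have Rd : R4 d := by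
      rcases hf d with ⟨e, r⟩ | ⟨e, r⟩ | ⟨e, r⟩ | ⟨e, r⟩ <;> rw [hd] at e <;>
        first | exact r | exact absurd e (by decide)
    have hca : c ≠ a := fun h => by rw [h, ha] at hc; exact absurd hc (by decide)
    have hcb : c ≠ b := fun h => by rw [h, hb] at hc; exact absurd hc (by decide)
    have hda : d ≠ a := fun h => by rw [h, ha] at hd; exact absurd hd (by decide)
    have hdb : d ≠ b := fun h => by rw [h, hb] at hd; exact absurd hd (by decide)
    by_cases H2 : ∃ v : ℤ × ℤ,
        ∀ i : Fin 4, (|v.1 - (g i).1| + |v.2 - (g i).2| ≤ (k : ℤ) ↔ i ∈ ({a, b} : Set (Fin 4)))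
    · obtain ⟨v1, hv1⟩ := H2
      have cA := (key v1 a).mp ((hv1 a).mpr (by simp))
      have cB := (key v1 b).mp ((hv1 b).mpr (by simp))
      have nc : ¬(|v1.1 + v1.2 - u c| ≤ (k : ℤ) ∧ |v1.1 - v1.2 - w c| ≤ (k : ℤ)) := by
        rw [← key]
        intro h
        have := (hv1 c).mp h
        simp only [Set.mem_insert_iff, Set.mem_singleton_iff] at this
        rcases this with h | h
        · exact hca h
        · exact hcb h
      have nd : ¬(|v1.1 + v1.2 - u d| ≤ (k : ℤ) ∧ |v1.1 - v1.2 - w d| ≤ (k : ℤ)) := by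
        rw [← key]
        intro h
        have := (hv1 d).mp h
        simp only [Set.mem_insert_iff, Set.mem_singleton_iff] at this
        rcases this with h | h
        · exact hda h
        · exact hdb h
      -- c's u-coordinate is between b's and a's, so only its w-coordinate can fail
      have ucA : u c < u a := Ra c hca
      have ucB : u b < u c := Rb c hcb
      have udA : u d < u a := Ra d hda
      have udB : u b < u d := Rb d hdb
      have cA1 := abs_le.mp cA.1
      have cB1 := abs_le.mp cB.1
      have cA2 := abs_le.mp cA.2
      have uOKc : |v1.1 + v1.2 - u c| ≤ (k : ℤ) := by
        rw [abs_le]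
        constructor <;> linarith [cA1.1, cA1.2, cB1.1, cB1.2]
      have uOKd : |v1.1 + v1.2 - u d| ≤ (k : ℤ) := by
        rw [abs_le]
        constructor <;> linarith [cA1.1, cA1.2, cB1.1, cB1.2]
      have wc : ¬(|v1.1 - v1.2 - w c| ≤ (k : ℤ)) := fun h => nc ⟨uOKc, h⟩
      have wd : ¬(|v1.1 - v1.2 - w d| ≤ (k : ℤ)) := fun h => nd ⟨uOKd, h⟩
      rw [not_le, lt_abs] at wc wd
      have wAc : w a < w c := Rc a (Ne.symm hca)
      have wDa : w d < w a := Rd a (Ne.symm hda)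
      have hcBig : (k : ℤ) < w c - (v1.1 - v1.2) := by
        rcases wc with h | h
        · exfalso; linarith [cA2.2]
        · linarith
      have hdSmall : (k : ℤ) < (v1.1 - v1.2) - w d := by
        rcases wd with h | h
        · linarith
        · exfalso; linarith [cA2.1]
      -- hence w c - w d > 2k, so {c, d} cannot be cut out
      refine ⟨{c, d}, ?_⟩
      rintro ⟨v2, hv2⟩
      have cC := (key v2 c).mp ((hv2 c).mpr (by simp))
      have cD := (key v2 d).mp ((hv2 d).mpr (by simp))
      have h1 := (abs_le.mp cC.2).1
      have h2 := (abs_le.mp cD.2).2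
      linarith
    · exact ⟨{a, b}, H2⟩
end

section
/- The VC dimension of the dual set system of L1-balls of radius k in ℤ² is at most 3: no four points g₁,...,g₄ ∈ ℤ² can be dual-shattered, meaning there is some S ⊆ {1,2,3,4} with no point v ∈ ℤ² satisfying ‖v − gᵢ‖₁ ≤ k exactly for i ∈ S. -/
/-- For integers, `|x| + |y| ≤ k` iff both `x+y` and `x-y` lie in `[-k, k]`. -/
lemma abs_add_abs_le_iff' (x y k : ℤ) :
    |x| + |y| ≤ k ↔ (-k ≤ x + y ∧ x + y ≤ k ∧ -k ≤ x - y ∧ x - y ≤ k) := by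
  rcases abs_cases x with ⟨h1, _⟩ | ⟨h1, _⟩ <;>
    rcases abs_cases y with ⟨h2, _⟩ | ⟨h2, _⟩ <;> omega

/-- Abstract box version: four points in the plane (given by coordinates `A`, `B`),
no two identical, cannot be dual-shattered by axis-parallel boxes `[u.1-k,u.1+k] ×
[u.2-k,u.2+k]`. -/
lemma main_aux (k : ℤ) (A B : Fin 4 → ℤ) :
    ∃ S : Set (Fin 4), ¬ ∃ u : ℤ × ℤ, ∀ i : Fin 4,
      ((-k ≤ u.1 - A i ∧ u.1 - A i ≤ k ∧ -k ≤ u.2 - B i ∧ u.2 - B i ≤ k) ↔ i ∈ S) := by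
  classical
  by_cases h1 : ∃ u : ℤ × ℤ, ∀ i : Fin 4,
      -k ≤ u.1 - A i ∧ u.1 - A i ≤ k ∧ -k ≤ u.2 - B i ∧ u.2 - B i ≤ k
  · obtain ⟨u₀, hu₀⟩ := h1
    by_cases h2 : ∃ m : Fin 4, (∃ j, j ≠ m ∧ A j ≤ A m) ∧ (∃ j, j ≠ m ∧ A m ≤ A j) ∧
        (∃ j, j ≠ m ∧ B j ≤ B m) ∧ (∃ j, j ≠ m ∧ B m ≤ B j)
    · -- a "middle" point: its complement is not realizable
      obtain ⟨m, ⟨j1, hj1, ha1⟩, ⟨j2, hj2, ha2⟩, ⟨j3, hj3, hb3⟩, ⟨j4, hj4, hb4⟩⟩ := h2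
      refine ⟨{m}ᶜ, ?_⟩
      rintro ⟨u, hu⟩
      have c1 := (hu j1).mpr (by simpa using hj1)
      have c2 := (hu j2).mpr (by simpa using hj2)
      have c3 := (hu j3).mpr (by simpa using hj3)
      have c4 := (hu j4).mpr (by simpa using hj4)
      have hmc : m ∈ ({m}ᶜ : Set (Fin 4)) := (hu m).mp (by omega)
      simp at hmc
    · -- every point is a strict extreme in some direction
      have hrole : ∀ m : Fin 4, (∀ j, j ≠ m → A m < A j) ∨ (∀ j, j ≠ m → A j < A m) ∨
          (∀ j, j ≠ m → B m < B j) ∨ (∀ j, j ≠ m → B j < B m) := by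
        intro m
        by_contra hc
        push_neg at hc
        obtain ⟨⟨j1, hj1, ha1⟩, ⟨j2, hj2, ha2⟩, ⟨j3, hj3, hb3⟩, ⟨j4, hj4, hb4⟩⟩ := hc
        exact h2 ⟨m, ⟨j1, hj1, ha1⟩, ⟨j2, hj2, ha2⟩, ⟨j3, hj3, hb3⟩, ⟨j4, hj4, hb4⟩⟩
      have hex : ∀ m : Fin 4, ∃ r : Fin 4,
          (r = 0 → ∀ j, j ≠ m → A m < A j) ∧ (r = 1 → ∀ j, j ≠ m → A j < A m) ∧
          (r = 2 → ∀ j, j ≠ m → B m < B j) ∧ (r = 3 → ∀ j, j ≠ m → B j < B m) ∧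
          (r = 0 ∨ r = 1 ∨ r = 2 ∨ r = 3) := by
        intro m
        rcases hrole m with h | h | h | h
        · exact ⟨0, fun _ => h, fun h' => absurd h' (by decide),
            fun h' => absurd h' (by decide), fun h' => absurd h' (by decide), Or.inl rfl⟩
        · exact ⟨1, fun h' => absurd h' (by decide), fun _ => h,
            fun h' => absurd h' (by decide), fun h' => absurd h' (by decide), Or.inr (Or.inl rfl)⟩
        · exact ⟨2, fun h' => absurd h' (by decide), fun h' => absurd h' (by decide),
            fun _ => h, fun h' => absurd h' (by decide), Or.inr (Or.inr (Or.inl rfl))⟩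
        · exact ⟨3, fun h' => absurd h' (by decide), fun h' => absurd h' (by decide),
            fun h' => absurd h' (by decide), fun _ => h, Or.inr (Or.inr (Or.inr rfl))⟩
      choose f hf using hex
      -- each strict role is held by at most one point, so f is injective
      have hinj : Function.Injective f := by
        intro m m' hmm'
        by_contra hne
        have hm := hf m
        have hm' := hf m'
        rcases hm.2.2.2.2 with h | h | h | h
        · have u1 := hm.1 h m' (fun e => hne e.symm)
          have u2 := hm'.1 (hmm' ▸ h) m (fun e => hne e)
          omega
        · have u1 := hm.2.1 h m' (fun e => hne e.symm)
          have u2 := hm'.2.1 (hmm' ▸ h) m (fun e => hne e)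
          omega
        · have u1 := hm.2.2.1 h m' (fun e => hne e.symm)
          have u2 := hm'.2.2.1 (hmm' ▸ h) m (fun e => hne e)
          omega
        · have u1 := hm.2.2.2.1 h m' (fun e => hne e.symm)
          have u2 := hm'.2.2.2.1 (hmm' ▸ h) m (fun e => hne e)
          omega
      have hsurj : Function.Surjective f := Finite.injective_iff_surjective.mp hinj
      obtain ⟨p1, hp1⟩ := hsurj 0
      obtain ⟨p2, hp2⟩ := hsurj 1
      obtain ⟨p3, hp3⟩ := hsurj 2
      obtain ⟨p4, hp4⟩ := hsurj 3
      have r1 : ∀ j, j ≠ p1 → A p1 < A j := (hf p1).1 hp1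
      have r2 : ∀ j, j ≠ p2 → A j < A p2 := (hf p2).2.1 hp2
      have r3 : ∀ j, j ≠ p3 → B p3 < B j := (hf p3).2.2.1 hp3
      have r4 : ∀ j, j ≠ p4 → B j < B p4 := (hf p4).2.2.2.1 hp4
      have d31 : p3 ≠ p1 := fun e => absurd ((e ▸ hp3).symm.trans hp1) (by decide)
      have d32 : p3 ≠ p2 := fun e => absurd ((e ▸ hp3).symm.trans hp2) (by decide)
      have d41 : p4 ≠ p1 := fun e => absurd ((e ▸ hp4).symm.trans hp1) (by decide)
      have d42 : p4 ≠ p2 := fun e => absurd ((e ▸ hp4).symm.trans hp2) (by decide)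
      refine ⟨{p1, p2}, ?_⟩
      rintro ⟨u, hu⟩
      have c1 := (hu p1).mpr (by simp)
      have c2 := (hu p2).mpr (by simp)
      have c3 : ¬(-k ≤ u.1 - A p3 ∧ u.1 - A p3 ≤ k ∧ -k ≤ u.2 - B p3 ∧ u.2 - B p3 ≤ k) :=
        (not_congr (hu p3)).mpr (by simp [d31, d32])
      have c4 : ¬(-k ≤ u.1 - A p4 ∧ u.1 - A p4 ≤ k ∧ -k ≤ u.2 - B p4 ∧ u.2 - B p4 ≤ k) :=
        (not_congr (hu p4)).mpr (by simp [d41, d42])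
      have e31 := r1 p3 d31
      have e32 := r2 p3 d32
      have e41 := r1 p4 d41
      have e42 := r2 p4 d42
      have e13 := r3 p1 d31.symm
      have e14 := r4 p1 d41.symm
      have s3 := hu₀ p3
      have s4 := hu₀ p4
      omega
  · exact ⟨Set.univ, fun ⟨u, hu⟩ => h1 ⟨u, fun i => (hu i).mpr (Set.mem_univ i)⟩⟩

/-- The VC dimension of the dual set system of radius-`k` L1-balls in `ℤ²` is at
most 3: no four distinct points `g₁, …, g₄ ∈ ℤ²` can be dual-shattered, i.e. there
is some `S ⊆ {1,2,3,4}` such that no point `v ∈ ℤ²` satisfies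
`‖v - gᵢ‖₁ ≤ k` exactly for `i ∈ S`. -/
theorem vc_dual_upper_bound (k : ℕ) (g : Fin 4 → ℤ × ℤ) (hg : Function.Injective g) :
    ∃ S : Set (Fin 4), ¬ ∃ v : ℤ × ℤ,
      ∀ i : Fin 4, (|v.1 - (g i).1| + |v.2 - (g i).2| ≤ (k : ℤ) ↔ i ∈ S) := by
  obtain ⟨S, hS⟩ := main_aux (k : ℤ) (fun i => (g i).1 + (g i).2) (fun i => (g i).1 - (g i).2)
  refine ⟨S, fun ⟨v, hv⟩ => hS ⟨(v.1 + v.2, v.1 - v.2), fun i => ?_⟩⟩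
  rw [← hv i, abs_add_abs_le_iff']
  constructor <;> intro h <;> [constructor; constructor] <;> omega
end

section
/- The dual graph of a 1-thin simple polyomino is a tree: if P is an edge-connected finite set of unit cells in ℤ² containing no 2×2 block of cells and having no holes, then the grid graph on the cells of P (with edges between edge-adjacent cells) is acyclic and connected. -/
open SimpleGraph

namespace SimpleGraph.Walk

variable {V : Type*} {G : SimpleGraph V} {u : V}

theorem map_fst_darts_perm_map_snd_darts (c : G.Walk u u) :
    (c.darts.map (·.fst)).Perm (c.darts.map (·.snd)) := by
  have h := List.perm_append_singleton u (c.darts.map (·.fst))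
  rw [c.map_fst_darts_append.trans c.cons_map_snd_darts.symm] at h
  exact h.cons_inv.symm

theorem sum_map_darts_fst_eq_sum_map_darts_snd {M : Type*} [AddCommMonoid M] (c : G.Walk u u)
    (f : V → M) : (c.darts.map fun d => f d.fst).sum = (c.darts.map fun d => f d.snd).sum := by
  simpa only [List.map_map, Function.comp_def] using
    (c.map_fst_darts_perm_map_snd_darts.map f).sum_eq

end SimpleGraph.Walk

namespace gridGraph

theorem adj_iff {a b : ℤ × ℤ} : gridGraph.Adj a b ↔
    b = (a.1 + 1, a.2) ∨ b = (a.1 - 1, a.2) ∨ b = (a.1, a.2 + 1) ∨ b = (a.1, a.2 - 1) := by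
  change |a.1 - b.1| + |a.2 - b.2| = 1 ↔ _
  rw [Int.abs_eq_natAbs, Int.abs_eq_natAbs]
  simp only [Prod.ext_iff]
  omega

/-- `d` crosses the vertical ray going up from the lattice corner `(q.1 + 1/2, q.2 + 1/2)`. -/
def CrossesRay (q : ℤ × ℤ) (d : gridGraph.Dart) : Prop :=
  d.fst.2 = d.snd.2 ∧ q.2 < d.fst.2 ∧ min d.fst.1 d.snd.1 = q.1 ∧ max d.fst.1 d.snd.1 = q.1 + 1

open Classical in
noncomputable def crossingParity {u : ℤ × ℤ} (c : gridGraph.Walk u u) (q : ℤ × ℤ) : ZMod 2 :=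
  (c.darts.map fun d => if CrossesRay q d then 1 else 0).sum

variable {u : ℤ × ℤ} (c : gridGraph.Walk u u)

open Classical in
theorem crossingParity_eq_of_coboundary {q q' : ℤ × ℤ} (f : ℤ × ℤ → ZMod 2)
    (h : ∀ d ∈ c.darts, ((if CrossesRay q d then 1 else 0) + if CrossesRay q' d then 1 else 0) =
      f d.fst + f d.snd) :
    crossingParity c q = crossingParity c q' := by
  rw [← CharTwo.add_eq_zero, crossingParity, crossingParity, ← List.sum_map_add,
    List.map_congr_left h, List.sum_map_add, c.sum_map_darts_fst_eq_sum_map_darts_snd,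
    CharTwo.add_self_eq_zero]

theorem crossingParity_eq_right {q : ℤ × ℤ} (hq : (q.1 + 1, q.2) ∉ c.support) :
    crossingParity c q = crossingParity c (q.1 + 1, q.2) := by
  classical
  refine crossingParity_eq_of_coboundary c (fun v => if v.1 = q.1 + 1 ∧ q.2 < v.2 then 1 else 0)
    fun d hd => ?_
  have hfst : d.fst ≠ (q.1 + 1, q.2) := fun h => hq (h ▸ c.dart_fst_mem_support_of_mem_darts hd)
  have hsnd : d.snd ≠ (q.1 + 1, q.2) := fun h => hq (h ▸ c.dart_snd_mem_support_of_mem_darts hd)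
  rcases adj_iff.mp d.adj with h | h | h | h <;>
    simp only [CrossesRay, h, Ne, Prod.ext_iff, true_and] at hfst hsnd ⊢ <;>
    split_ifs <;> first | decide | omega

theorem crossingParity_eq_up {q : ℤ × ℤ} (hq : (q.1, q.2 + 1) ∉ c.support) :
    crossingParity c q = crossingParity c (q.1, q.2 + 1) := by
  classical
  refine crossingParity_eq_of_coboundary c 0 fun d hd => ?_
  have hfst : d.fst ≠ (q.1, q.2 + 1) := fun h => hq (h ▸ c.dart_fst_mem_support_of_mem_darts hd)
  have hsnd : d.snd ≠ (q.1, q.2 + 1) := fun h => hq (h ▸ c.dart_snd_mem_support_of_mem_darts hd)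
  rcases adj_iff.mp d.adj with h | h | h | h <;>
    simp only [CrossesRay, h, Ne, Prod.ext_iff, true_and, Pi.zero_apply] at hfst hsnd ⊢ <;>
    split_ifs <;> first | decide | omega

theorem crossingParity_eq_of_adj {q q' : ℤ × ℤ} (hq : q ∉ c.support) (hq' : q' ∉ c.support)
    (hadj : gridGraph.Adj q q') : crossingParity c q = crossingParity c q' := by
  rcases adj_iff.mp hadj with rfl | rfl | rfl | rfl
  · exact crossingParity_eq_right c hq'
  · simpa only [sub_add_cancel] using
      (crossingParity_eq_right c (q := (q.1 - 1, q.2)) (by simpa)).symm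
  · exact crossingParity_eq_up c hq'
  · simpa only [sub_add_cancel] using
      (crossingParity_eq_up c (q := (q.1, q.2 - 1)) (by simpa)).symm

theorem crossingParity_eq_of_reachable {S : Set (ℤ × ℤ)} (hS : ∀ v ∈ c.support, v ∉ S) {s t : S}
    (h : (gridGraph.induce S).Reachable s t) : crossingParity c s = crossingParity c t := by
  obtain ⟨w⟩ := h
  induction w with
  | nil => rfl
  | @cons a b _ hab _ ih =>
    exact (crossingParity_eq_of_adj c (fun h => hS _ h a.2) (fun h => hS _ h b.2) hab).trans ih

theorem crossingParity_eq_zero_of_forall_le {q : ℤ × ℤ} (h : ∀ v ∈ c.support, v.2 ≤ q.2) :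
    crossingParity c q = 0 :=
  List.sum_eq_zero fun x hx => by
    obtain ⟨d, hd, rfl⟩ := List.mem_map.mp hx
    exact if_neg fun hcross => (h _ (c.dart_fst_mem_support_of_mem_darts hd)).not_gt hcross.2.1

variable {c}

theorem mem_edges_of_isCycle_of_isLexMax (hc : c.IsCycle) {p : ℤ × ℤ}
    (hp : p ∈ c.support) (hmax : ∀ v ∈ c.support, toLex v ≤ toLex p) :
    s(p, (p.1 - 1, p.2)) ∈ c.edges ∧ s(p, (p.1, p.2 - 1)) ∈ c.edges := by
  have hsub : c.toSubgraph.neighborSet p ⊆ {(p.1 - 1, p.2), (p.1, p.2 - 1)} := by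
    intro v hv
    have hle := Prod.Lex.toLex_le_toLex.mp
      (hmax v ((c.mem_verts_toSubgraph).mp (c.toSubgraph.edge_vert (Subgraph.adj_symm _ hv))))
    rcases adj_iff.mp hv.adj_sub with rfl | rfl | rfl | rfl <;> simp at hle ⊢
  have hpair : ({(p.1 - 1, p.2), (p.1, p.2 - 1)} : Set (ℤ × ℤ)).ncard = 2 :=
    Set.ncard_pair (by simp [Prod.ext_iff])
  have heq := Set.eq_of_subset_of_ncard_le hsub
    (by rw [hpair, hc.ncard_neighborSet_toSubgraph_eq_two hp])
  have hleft : (p.1 - 1, p.2) ∈ c.toSubgraph.neighborSet p := heq ▸ Set.mem_insert _ _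
  have hbelow : (p.1, p.2 - 1) ∈ c.toSubgraph.neighborSet p := heq ▸ Set.mem_insert_of_mem _ rfl
  exact ⟨Walk.adj_toSubgraph_iff_mem_edges.mp hleft, Walk.adj_toSubgraph_iff_mem_edges.mp hbelow⟩

theorem crossingParity_eq_one_of_isLexMax (hc : c.IsTrail) {p : ℤ × ℤ}
    (hmax : ∀ v ∈ c.support, toLex v ≤ toLex p) (hleft : s(p, (p.1 - 1, p.2)) ∈ c.edges) :
    crossingParity c (p.1 - 1, p.2 - 1) = 1 := by
  classical
  have hcross : ∀ d ∈ c.darts, CrossesRay (p.1 - 1, p.2 - 1) d ↔ d.edge = s(p, (p.1 - 1, p.2)) := by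
    intro d hd
    have hfst := Prod.Lex.toLex_le_toLex.mp (hmax _ (c.dart_fst_mem_support_of_mem_darts hd))
    have hsnd := Prod.Lex.toLex_le_toLex.mp (hmax _ (c.dart_snd_mem_support_of_mem_darts hd))
    change _ ↔ s(d.fst, d.snd) = _
    simp only [CrossesRay, Sym2.eq_iff, Prod.ext_iff]
    omega
  rw [crossingParity, List.map_congr_left fun d hd => if_congr (hcross d hd) rfl rfl]
  have hedges : (c.darts.map fun d => if d.edge = s(p, (p.1 - 1, p.2)) then (1 : ZMod 2) else 0) =
      c.edges.map fun e => if e = s(p, (p.1 - 1, p.2)) then 1 else 0 := by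
    rw [Walk.edges, List.map_map]; rfl
  have hcount : (c.edges.filter fun e => e = s(p, (p.1 - 1, p.2))).length = 1 := by
    rw [← List.count_eq_one_of_mem hc.edges_nodup hleft, List.count_eq_length_filter]; rfl
  simp [hedges, List.sum_map_ite, hcount]

theorem exists_crossingParity_eq_one_of_isCycle (hc : c.IsCycle) :
    ∃ q : ℤ × ℤ, (q.1 + 1, q.2) ∈ c.support ∧ (q.1, q.2 + 1) ∈ c.support ∧
      (q.1 + 1, q.2 + 1) ∈ c.support ∧ crossingParity c q = 1 := by
  obtain ⟨p, hp, hmax⟩ := c.support.toFinset.exists_max_image toLex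
    ⟨u, List.mem_toFinset.mpr c.start_mem_support⟩
  replace hp := List.mem_toFinset.mp hp
  replace hmax : ∀ v ∈ c.support, toLex v ≤ toLex p := fun v hv => hmax v (List.mem_toFinset.mpr hv)
  obtain ⟨hleft, hbelow⟩ := mem_edges_of_isCycle_of_isLexMax hc hp hmax
  refine ⟨(p.1 - 1, p.2 - 1), ?_, ?_, ?_,
    crossingParity_eq_one_of_isLexMax hc.isTrail hmax hleft⟩ <;> simp only [sub_add_cancel]
  · exact c.snd_mem_support_of_mem_edges hbelow
  · exact c.snd_mem_support_of_mem_edges hleft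
  · exact hp

end gridGraph

open gridGraph in
theorem oneThin_simple_dual_isTree_general (P : Finset (ℤ × ℤ))
    (hconn : (gridGraph.induce (↑P : Set (ℤ × ℤ))).Connected)
    (hthin : ¬ ∃ p : ℤ × ℤ, p ∈ P ∧ (p.1 + 1, p.2) ∈ P ∧ (p.1, p.2 + 1) ∈ P ∧
      (p.1 + 1, p.2 + 1) ∈ P)
    (hsimple : (gridGraph.induce ((↑P : Set (ℤ × ℤ))ᶜ)).Connected) :
    (gridGraph.induce (↑P : Set (ℤ × ℤ))).IsTree := by
  refine ⟨hconn, fun v c hc => ?_⟩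
  let c' := c.map (Embedding.induce (P : Set (ℤ × ℤ))).toHom
  have hP : ∀ w ∈ c'.support, w ∈ P := by
    intro w hw
    obtain ⟨x, -, rfl⟩ := List.mem_map.mp (c.support_map _ ▸ hw)
    exact x.2
  obtain ⟨q, h10, h01, h11, hq⟩ :=
    exists_crossingParity_eq_one_of_isCycle (c := c') (hc.map Subtype.val_injective)
  have hqP : q ∉ P := fun h => hthin ⟨q, h, hP _ h10, hP _ h01, hP _ h11⟩
  obtain ⟨M, hM⟩ := (P.image Prod.snd).exists_le
  have hfar : ((0, M + 1) : ℤ × ℤ) ∉ P := fun h => by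
    simpa using hM _ (Finset.mem_image_of_mem Prod.snd h)
  have h0 : crossingParity c' (0, M + 1) = 0 := crossingParity_eq_zero_of_forall_le c' fun w hw =>
    (hM _ (Finset.mem_image_of_mem Prod.snd (hP w hw))).trans (Int.le_add_one le_rfl)
  have hconst := crossingParity_eq_of_reachable c' (S := (↑P)ᶜ) (fun w hw h => h (hP w hw))
    (hsimple.preconnected ⟨q, hqP⟩ ⟨_, hfar⟩)
  exact one_ne_zero (hq.symm.trans (hconst.trans h0))

/-- The dual graph of a 1-thin simple polyomino is a tree: if `P` is a finite,
nonempty, edge-connected set of cells of `ℤ²`, contains no `2 × 2` block of cells,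
and has no holes (its complement in `ℤ²` is edge-connected), then the grid graph
induced on the cells of `P` is a tree (connected and acyclic). -/
theorem oneThin_simple_dual_isTree (P : Finset (ℤ × ℤ)) (hne : P.Nonempty)
    (hconn : (gridGraph.induce (↑P : Set (ℤ × ℤ))).Connected)
    (hthin : ¬ ∃ p : ℤ × ℤ, p ∈ P ∧ (p.1 + 1, p.2) ∈ P ∧ (p.1, p.2 + 1) ∈ P ∧
      (p.1 + 1, p.2 + 1) ∈ P)
    (hsimple : (gridGraph.induce ((↑P : Set (ℤ × ℤ))ᶜ)).Connected) :
    (gridGraph.induce (↑P : Set (ℤ × ℤ))).IsTree :=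
  oneThin_simple_dual_isTree_general P hconn hthin hsimple
end
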